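/- arXiv:1706.04637 — 4 statements merged into one kernel-verified Lean document; each statement's English description precedes it below -/
import Mathlib

section
/- Let p^B_i, p^S_j : (∏_i T^B_i) × (∏_j T^S_j) → ℝ be nonnegative payment functions satisfying Σ_{i=1}^n E_{b,s}[p^B_i(b,s)] = Σ_{j=1}^m E_{b,s}[p^S_j(b,s)]. Then there exist nonnegative payment functions p'^B_i, p'^S_j such that: (1) Σ_{i=1}^n p'^B_i(b,s) = Σ_{j=1}^m p'^S_j(b,s) for every type profile (b,s); (2) for every buyer i and every b_i ∈ T^B_i, E_{b_{-i},s}[p'^B_i((b_i,b_{-i}),s)] = E_{b_{-i},s}[p^B_i((b_i,b_{-i}),s)]; and (3) for every seller j and every s_j ∈ T^S_j, E_{b,s_{-j}}[p'^S_j(b,(s_j,s_{-j}))] = E_{b,s_{-j}}[p^S_j(b,(s_j,s_{-j}))]. -/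
open Finset

namespace Stmt12

variable {n m : ℕ} {K : Fin n → ℕ} {K' : Fin m → ℕ}

/-- A buyer type profile. -/
abbrev ProfileB (K : Fin n → ℕ) := ∀ i, Fin (K i)

/-- A seller type profile. -/
abbrev ProfileS (K' : Fin m → ℕ) := ∀ j, Fin (K' j)

/-- Expectation over the independent product of buyers' and sellers' distributions. -/
def Ex (f : ∀ i, Fin (K i) → ℝ) (g : ∀ j, Fin (K' j) → ℝ)
    (h : ProfileB K → ProfileS K' → ℝ) : ℝ :=
  ∑ b : ProfileB K, ∑ s : ProfileS K',
    ((∏ i, f i (b i)) * ∏ j, g j (s j)) * h b s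

def swapE {ι : Type*} [DecidableEq ι] {K : ι → ℕ} (j : ι) :
    (Fin (K j) × ∀ i, Fin (K i)) ≃ (Fin (K j) × ∀ i, Fin (K i)) where
  toFun p := (p.2 j, Function.update p.2 j p.1)
  invFun p := (p.2 j, Function.update p.2 j p.1)
  left_inv p := by simp
  right_inv p := by simp

lemma key {ι : Type*} [Fintype ι] [DecidableEq ι] {L : ι → ℕ}
    (g : ∀ i, Fin (L i) → ℝ) (hg1 : ∀ i, ∑ t, g i t = 1) (j : ι)
    (h : (∀ i, Fin (L i)) → ℝ) :
    ∑ t, g j t * ∑ s : ∀ i, Fin (L i), (∏ k, g k (s k)) * h (Function.update s j t)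
      = ∑ s : ∀ i, Fin (L i), (∏ k, g k (s k)) * h s := by
  have main : ∑ p : Fin (L j) × ∀ i, Fin (L i),
      g j p.1 * ((∏ k, g k (p.2 k)) * h (Function.update p.2 j p.1))
      = ∑ p : Fin (L j) × ∀ i, Fin (L i),
      g j p.1 * ((∏ k, g k (p.2 k)) * h p.2) := by
    refine Fintype.sum_equiv (swapE j) _ _ ?_
    intro p
    obtain ⟨t, s⟩ := p
    show g j t * ((∏ k, g k (s k)) * h (Function.update s j t))
      = g j ((swapE j (t,s)).1) * ((∏ k, g k ((swapE j (t,s)).2 k)) * h ((swapE j (t,s)).2))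
    simp only [swapE, Equiv.coe_fn_mk]
    have h1 : ∏ k, g k (s k) = g j (s j) * ∏ k ∈ univ.erase j, g k (s k) :=
      (Finset.mul_prod_erase univ _ (mem_univ j)).symm
    have h2 : ∏ k, g k ((Function.update s j t) k)
        = g j t * ∏ k ∈ univ.erase j, g k (s k) := by
      rw [← Finset.mul_prod_erase univ _ (mem_univ j), Function.update_self]
      congr 1
      exact Finset.prod_congr rfl fun k hk => by
        rw [Function.update_of_ne (Finset.ne_of_mem_erase hk)]
    rw [h1, h2]; ring
  calc ∑ t, g j t * ∑ s : ∀ i, Fin (L i), (∏ k, g k (s k)) * h (Function.update s j t)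
      = ∑ p : Fin (L j) × ∀ i, Fin (L i),
          g j p.1 * ((∏ k, g k (p.2 k)) * h (Function.update p.2 j p.1)) := by
        rw [Fintype.sum_prod_type]; simp [Finset.mul_sum]
    _ = ∑ p : Fin (L j) × ∀ i, Fin (L i),
          g j p.1 * ((∏ k, g k (p.2 k)) * h p.2) := main
    _ = ∑ t, g j t * ∑ s : ∀ i, Fin (L i), (∏ k, g k (s k)) * h s := by
        rw [Fintype.sum_prod_type]; simp [Finset.mul_sum]
    _ = (∑ t, g j t) * ∑ s : ∀ i, Fin (L i), (∏ k, g k (s k)) * h s := by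
        rw [Finset.sum_mul]
    _ = _ := by rw [hg1]; ring

lemma sum_W {ι : Type*} [Fintype ι] [DecidableEq ι] {L : ι → ℕ}
    (g : ∀ i, Fin (L i) → ℝ) (hg1 : ∀ i, ∑ t, g i t = 1) :
    ∑ s : ∀ i, Fin (L i), ∏ k, g k (s k) = 1 := by
  rw [← Fintype.piFinset_univ, ← Finset.prod_univ_sum]
  simp [hg1]

variable (f : ∀ i, Fin (K i) → ℝ) (g : ∀ j, Fin (K' j) → ℝ)

lemma Ex_factor (h : ProfileB K → ProfileS K' → ℝ) :
    Ex f g h = ∑ b : ProfileB K, (∏ i, f i (b i)) *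
      ∑ s : ProfileS K', (∏ j, g j (s j)) * h b s := by
  unfold Ex
  refine Finset.sum_congr rfl fun b _ => ?_
  rw [Finset.mul_sum]
  exact Finset.sum_congr rfl fun s _ => by ring

lemma marg_buyer (hf1 : ∀ i, ∑ t, f i t = 1)
    (h : ProfileB K → ProfileS K' → ℝ) (i : Fin n) :
    ∑ t, f i t * Ex f g (fun b s => h (Function.update b i t) s) = Ex f g h := by
  simp only [Ex_factor]
  exact key f hf1 i (fun b => ∑ s : ProfileS K', (∏ j, g j (s j)) * h b s)

lemma marg_seller (hg1 : ∀ j, ∑ t, g j t = 1)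
    (h : ProfileB K → ProfileS K' → ℝ) (j : Fin m) :
    ∑ t, g j t * Ex f g (fun b s => h b (Function.update s j t)) = Ex f g h := by
  simp only [Ex_factor]
  calc ∑ t : Fin (K' j), g j t * ∑ b : ProfileB K, (∏ i, f i (b i)) *
          ∑ s : ProfileS K', (∏ k, g k (s k)) * h b (Function.update s j t)
      = ∑ t : Fin (K' j), ∑ b : ProfileB K, g j t * ((∏ i, f i (b i)) *
          ∑ s : ProfileS K', (∏ k, g k (s k)) * h b (Function.update s j t)) := by
        simp only [Finset.mul_sum]
    _ = ∑ b : ProfileB K, ∑ t : Fin (K' j), g j t * ((∏ i, f i (b i)) *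
          ∑ s : ProfileS K', (∏ k, g k (s k)) * h b (Function.update s j t)) :=
        Finset.sum_comm
    _ = ∑ b : ProfileB K, (∏ i, f i (b i)) * ∑ t : Fin (K' j), g j t *
          ∑ s : ProfileS K', (∏ k, g k (s k)) * h b (Function.update s j t) := by
        refine Finset.sum_congr rfl fun b _ => ?_
        rw [Finset.mul_sum]
        exact Finset.sum_congr rfl fun t _ => by ring
    _ = ∑ b : ProfileB K, (∏ i, f i (b i)) *
          ∑ s : ProfileS K', (∏ k, g k (s k)) * h b s := by
        exact Finset.sum_congr rfl fun b _ => by rw [key g hg1 j (h b)]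

lemma Ex_nonneg (hf : ∀ i t, 0 < f i t) (hg : ∀ j t, 0 < g j t)
    {h : ProfileB K → ProfileS K' → ℝ} (hh : ∀ b s, 0 ≤ h b s) :
    0 ≤ Ex f g h := by
  refine Finset.sum_nonneg fun b _ => Finset.sum_nonneg fun s _ => ?_
  have : 0 ≤ (∏ i, f i (b i)) * ∏ j, g j (s j) :=
    mul_nonneg (Finset.prod_nonneg fun i _ => (hf i _).le)
      (Finset.prod_nonneg fun j _ => (hg j _).le)
  exact mul_nonneg this (hh b s)

lemma Ex_sum {ι : Type*} (u : Finset ι) (h : ι → ProfileB K → ProfileS K' → ℝ) :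
    Ex f g (fun b s => ∑ x ∈ u, h x b s) = ∑ x ∈ u, Ex f g (h x) := by
  unfold Ex
  calc ∑ b : ProfileB K, ∑ s : ProfileS K',
        ((∏ i, f i (b i)) * ∏ j, g j (s j)) * ∑ x ∈ u, h x b s
      = ∑ b : ProfileB K, ∑ s : ProfileS K', ∑ x ∈ u,
          ((∏ i, f i (b i)) * ∏ j, g j (s j)) * h x b s := by
        simp only [Finset.mul_sum]
    _ = ∑ b : ProfileB K, ∑ x ∈ u, ∑ s : ProfileS K',
          ((∏ i, f i (b i)) * ∏ j, g j (s j)) * h x b s :=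
        Finset.sum_congr rfl fun b _ => Finset.sum_comm
    _ = ∑ x ∈ u, ∑ b : ProfileB K, ∑ s : ProfileS K',
          ((∏ i, f i (b i)) * ∏ j, g j (s j)) * h x b s :=
        Finset.sum_comm

lemma Ex_const_mul (c : ℝ) (h : ProfileB K → ProfileS K' → ℝ) :
    Ex f g (fun b s => c * h b s) = c * Ex f g h := by
  unfold Ex
  rw [Finset.mul_sum]
  refine Finset.sum_congr rfl fun b _ => ?_
  rw [Finset.mul_sum]
  exact Finset.sum_congr rfl fun s _ => by ring

lemma Ex_const (hf1 : ∀ i, ∑ t, f i t = 1) (hg1 : ∀ j, ∑ t, g j t = 1) (c : ℝ) :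
    Ex f g (fun _ _ => c) = c := by
  unfold Ex
  have : ∀ b : ProfileB K, ∑ s : ProfileS K',
      ((∏ i, f i (b i)) * ∏ j, g j (s j)) * c
      = (∏ i, f i (b i)) * c := by
    intro b
    have : ∑ s : ProfileS K', ((∏ i, f i (b i)) * ∏ j, g j (s j)) * c
        = ((∏ i, f i (b i)) * c) * ∑ s : ProfileS K', ∏ j, g j (s j) := by
      rw [Finset.mul_sum]
      exact Finset.sum_congr rfl fun s _ => by ring
    rw [this, sum_W g hg1, mul_one]
  simp only [this]
  rw [← Finset.sum_mul, sum_W f hf1, one_mul]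


/-- nonnegative payments that are ex-ante strongly budget balanced can be
rebalanced to be (ex-post) strongly budget balanced while preserving every agent's
interim payments. -/
theorem stmt_12
    (n m : ℕ) (hn : 0 < n) (hm : 0 < m)
    (K : Fin n → ℕ) (hK : ∀ i, 0 < K i)
    (K' : Fin m → ℕ) (hK' : ∀ j, 0 < K' j)
    (f : ∀ i, Fin (K i) → ℝ) (hf : ∀ i t, 0 < f i t) (hf1 : ∀ i, ∑ t, f i t = 1)
    (g : ∀ j, Fin (K' j) → ℝ) (hg : ∀ j t, 0 < g j t) (hg1 : ∀ j, ∑ t, g j t = 1)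
    (pB : Fin n → ProfileB K → ProfileS K' → ℝ)
    (pS : Fin m → ProfileB K → ProfileS K' → ℝ)
    (hpBnn : ∀ i b s, 0 ≤ pB i b s)
    (hpSnn : ∀ j b s, 0 ≤ pS j b s)
    (hSBBexante : Ex f g (fun b s => ∑ i, pB i b s)
      = Ex f g (fun b s => ∑ j, pS j b s)) :
    ∃ (pB' : Fin n → ProfileB K → ProfileS K' → ℝ)
      (pS' : Fin m → ProfileB K → ProfileS K' → ℝ),
      (∀ i b s, 0 ≤ pB' i b s) ∧
      (∀ j b s, 0 ≤ pS' j b s) ∧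
      -- (1) strong budget balance at every profile
      (∀ b s, ∑ i, pB' i b s = ∑ j, pS' j b s) ∧
      -- (2) buyers' interim payments preserved
      (∀ (i : Fin n) (t : Fin (K i)),
        Ex f g (fun b s => pB' i (Function.update b i t) s)
          = Ex f g (fun b s => pB i (Function.update b i t) s)) ∧
      -- (3) sellers' interim gains preserved
      (∀ (j : Fin m) (t : Fin (K' j)),
        Ex f g (fun b s => pS' j b (Function.update s j t))
          = Ex f g (fun b s => pS j b (Function.update s j t))) := by
  classical
  set β : ∀ i : Fin n, Fin (K i) → ℝ :=
    fun i t => Ex f g (fun b s => pB i (Function.update b i t) s) with hβ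
  set σ : ∀ j : Fin m, Fin (K' j) → ℝ :=
    fun j t => Ex f g (fun b s => pS j b (Function.update s j t)) with hσ
  set P : ℝ := Ex f g (fun b s => ∑ j, pS j b s) with hP
  have hβnn : ∀ i t, 0 ≤ β i t := fun i t =>
    Ex_nonneg f g hf hg (fun b s => hpBnn i _ s)
  have hσnn : ∀ j t, 0 ≤ σ j t := fun j t =>
    Ex_nonneg f g hf hg (fun b s => hpSnn j b _)
  have hβsum : ∀ i, ∑ t, f i t * β i t = Ex f g (pB i) := fun i =>
    marg_buyer f g hf1 (pB i) i
  have hσsum : ∀ j, ∑ t, g j t * σ j t = Ex f g (pS j) := fun j =>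
    marg_seller f g hg1 (pS j) j
  have hPnn : 0 ≤ P :=
    Ex_nonneg f g hf hg (fun b s => Finset.sum_nonneg fun j _ => hpSnn j b s)
  -- Ex of β-marginal function equals P
  have hcompB : ∀ (i : Fin n) (c : Fin (K i) → ℝ),
      Ex f g (fun b s => c (b i)) = ∑ t, f i t * c t := by
    intro i c
    have := marg_buyer f g hf1 (fun b _ => c (b i)) i
    rw [← this]
    refine Finset.sum_congr rfl fun t _ => ?_
    congr 1
    simp [Ex_const f g hf1 hg1]
  have hcompS : ∀ (j : Fin m) (c : Fin (K' j) → ℝ),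
      Ex f g (fun b s => c (s j)) = ∑ t, g j t * c t := by
    intro j c
    have := marg_seller f g hg1 (fun _ s => c (s j)) j
    rw [← this]
    refine Finset.sum_congr rfl fun t _ => ?_
    congr 1
    simp [Ex_const f g hf1 hg1]
  have hES : Ex f g (fun b s => ∑ j, σ j (s j)) = P := by
    rw [Ex_sum, hP, Ex_sum]
    exact Finset.sum_congr rfl fun j _ => by rw [hcompS j (σ j), hσsum]
  have hEB : Ex f g (fun b s => ∑ i, β i (b i)) = P := by
    rw [Ex_sum, ← hSBBexante, Ex_sum]
    exact Finset.sum_congr rfl fun i _ => by rw [hcompB i (β i), hβsum]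
  rcases eq_or_lt_of_le hPnn with h0 | hPpos
  · -- P = 0 : all payments are identically 0
    have hpS0 : ∀ j b s, pS j b s = 0 := by
      intro j b s
      have hz : Ex f g (fun b s => ∑ j, pS j b s) = 0 := h0.symm
      unfold Ex at hz
      have h1 := (Finset.sum_eq_zero_iff_of_nonneg (fun b _ =>
        Finset.sum_nonneg fun s _ => mul_nonneg
          (mul_nonneg (Finset.prod_nonneg fun i _ => (hf i _).le)
            (Finset.prod_nonneg fun j _ => (hg j _).le))
          (Finset.sum_nonneg fun j _ => hpSnn j _ _))).mp hz b (mem_univ b)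
      have h2 := (Finset.sum_eq_zero_iff_of_nonneg (fun s _ => mul_nonneg
          (mul_nonneg (Finset.prod_nonneg fun i _ => (hf i _).le)
            (Finset.prod_nonneg fun j _ => (hg j _).le))
          (Finset.sum_nonneg fun j _ => hpSnn j _ _))).mp h1 s (mem_univ s)
      have hw : 0 < (∏ i, f i (b i)) * ∏ j, g j (s j) :=
        mul_pos (Finset.prod_pos fun i _ => hf i _) (Finset.prod_pos fun j _ => hg j _)
      have h3 : ∑ j, pS j b s = 0 := by
        rcases mul_eq_zero.mp h2 with h | h
        · exact absurd h hw.ne'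
        · exact h
      exact (Finset.sum_eq_zero_iff_of_nonneg (fun j _ => hpSnn j b s)).mp h3 j (mem_univ j)
    have hpB0 : ∀ i b s, pB i b s = 0 := by
      intro i b s
      have hz : Ex f g (fun b s => ∑ i, pB i b s) = 0 := by rw [hSBBexante, ← h0]
      unfold Ex at hz
      have h1 := (Finset.sum_eq_zero_iff_of_nonneg (fun b _ =>
        Finset.sum_nonneg fun s _ => mul_nonneg
          (mul_nonneg (Finset.prod_nonneg fun i _ => (hf i _).le)
            (Finset.prod_nonneg fun j _ => (hg j _).le))
          (Finset.sum_nonneg fun i _ => hpBnn i _ _))).mp hz b (mem_univ b)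
      have h2 := (Finset.sum_eq_zero_iff_of_nonneg (fun s _ => mul_nonneg
          (mul_nonneg (Finset.prod_nonneg fun i _ => (hf i _).le)
            (Finset.prod_nonneg fun j _ => (hg j _).le))
          (Finset.sum_nonneg fun i _ => hpBnn i _ _))).mp h1 s (mem_univ s)
      have hw : 0 < (∏ i, f i (b i)) * ∏ j, g j (s j) :=
        mul_pos (Finset.prod_pos fun i _ => hf i _) (Finset.prod_pos fun j _ => hg j _)
      have h3 : ∑ i, pB i b s = 0 := by
        rcases mul_eq_zero.mp h2 with h | h
        · exact absurd h hw.ne'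
        · exact h
      exact (Finset.sum_eq_zero_iff_of_nonneg (fun i _ => hpBnn i b s)).mp h3 i (mem_univ i)
    refine ⟨fun _ _ _ => 0, fun _ _ _ => 0, fun _ _ _ => le_refl 0, fun _ _ _ => le_refl 0,
      by simp, ?_, ?_⟩
    · intro i t
      simp [hpB0]
    · intro j t
      simp [hpS0]
  · -- P > 0
    refine ⟨fun i b s => β i (b i) * (∑ j, σ j (s j)) / P,
            fun j b s => σ j (s j) * (∑ i, β i (b i)) / P, ?_, ?_, ?_, ?_, ?_⟩
    · intro i b s
      exact div_nonneg (mul_nonneg (hβnn i _) (Finset.sum_nonneg fun j _ => hσnn j _)) hPnn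
    · intro j b s
      exact div_nonneg (mul_nonneg (hσnn j _) (Finset.sum_nonneg fun i _ => hβnn i _)) hPnn
    · intro b s
      rw [← Finset.sum_div, ← Finset.sum_div, ← Finset.sum_mul, ← Finset.sum_mul]
      ring_nf
    · intro i t
      have hupd : (fun (b : ProfileB K) (s : ProfileS K') =>
          β i ((Function.update b i t) i) * (∑ j, σ j (s j)) / P)
          = fun b s => (β i t / P) * (∑ j, σ j (s j)) := by
        funext b s
        rw [Function.update_self]
        ring
      rw [show (fun (b : ProfileB K) (s : ProfileS K') =>
            β i ((Function.update b i t) i) * (∑ j, σ j (s j)) / P)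
          = fun b s => (β i t / P) * (∑ j, σ j (s j)) from hupd]
      rw [Ex_const_mul, hES]
      rw [div_mul_cancel₀ _ hPpos.ne']
    · intro j t
      have hupd : (fun (b : ProfileB K) (s : ProfileS K') =>
          σ j ((Function.update s j t) j) * (∑ i, β i (b i)) / P)
          = fun b s => (σ j t / P) * (∑ i, β i (b i)) := by
        funext b s
        rw [Function.update_self]
        ring
      rw [show (fun (b : ProfileB K) (s : ProfileS K') =>
            σ j ((Function.update s j t) j) * (∑ i, β i (b i)) / P)
          = fun b s => (σ j t / P) * (∑ i, β i (b i)) from hupd]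
      rw [Ex_const_mul, hEB]
      rw [div_mul_cancel₀ _ hPpos.ne']


end Stmt12
end

section
/- Let M = (x, p^B, p^S) be a double-auction mechanism with nonnegative payments that is IR, BIC and ex-ante WBB. Then there exist nonnegative payment rules p'^B, p'^S such that the mechanism M' = (x, p'^B, p'^S), with the same allocation rule x, is IR, BIC and SBB (Σ_i p'^B_i(b,s) = Σ_j p'^S_j(b,s) for every type profile (b,s)). -/
open Finset

namespace Stmt13

variable {n m : ℕ} {K : Fin n → ℕ} {K' : Fin m → ℕ}

/-- A buyer type profile. -/
abbrev ProfileB (K : Fin n → ℕ) := ∀ i, Fin (K i)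

/-- A seller type profile. -/
abbrev ProfileS (K' : Fin m → ℕ) := ∀ j, Fin (K' j)

/-- Expectation over the independent product of buyers' and sellers' distributions. -/
def Ex (f : ∀ i, Fin (K i) → ℝ) (g : ∀ j, Fin (K' j) → ℝ)
    (h : ProfileB K → ProfileS K' → ℝ) : ℝ :=
  ∑ b : ProfileB K, ∑ s : ProfileS K',
    ((∏ i, f i (b i)) * ∏ j, g j (s j)) * h b s

/-- Interim utility of buyer `i` with true type `t` reporting `t'`. -/
def utilB (vB : ∀ i, Fin (K i) → ℝ)
    (f : ∀ i, Fin (K i) → ℝ) (g : ∀ j, Fin (K' j) → ℝ)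
    (xB : Fin n → ProfileB K → ProfileS K' → ℝ)
    (pB : Fin n → ProfileB K → ProfileS K' → ℝ)
    (i : Fin n) (t t' : Fin (K i)) : ℝ :=
  Ex f g (fun b s =>
    vB i t * xB i (Function.update b i t') s - pB i (Function.update b i t') s)

/-- Interim utility of seller `j` with true type `t` reporting `t'`. -/
def utilS (vS : ∀ j, Fin (K' j) → ℝ)
    (f : ∀ i, Fin (K i) → ℝ) (g : ∀ j, Fin (K' j) → ℝ)
    (xS : Fin m → ProfileB K → ProfileS K' → ℝ)
    (pS : Fin m → ProfileB K → ProfileS K' → ℝ)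
    (j : Fin m) (t t' : Fin (K' j)) : ℝ :=
  Ex f g (fun b s =>
    pS j b (Function.update s j t') - vS j t * xS j b (Function.update s j t'))

section WSumLemmas


/-- Weighted sum over a finite product of finite type spaces. -/
def WSum {ι : Type*} [Fintype ι] [DecidableEq ι] (κ : ι → ℕ) (f : ∀ i, Fin (κ i) → ℝ)
    (φ : (∀ i, Fin (κ i)) → ℝ) : ℝ :=
  ∑ b : ∀ i, Fin (κ i), (∏ i, f i (b i)) * φ b

variable {ι : Type*} [Fintype ι] [DecidableEq ι] {κ : ι → ℕ}

lemma wsum_congr (f : ∀ i, Fin (κ i) → ℝ) {φ ψ : (∀ i, Fin (κ i)) → ℝ}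
    (h : ∀ b, φ b = ψ b) : WSum κ f φ = WSum κ f ψ := by
  unfold WSum; exact Finset.sum_congr rfl fun b _ => by rw [h b]

lemma sum_pmf_pi (f : ∀ i, Fin (κ i) → ℝ) (hf1 : ∀ i, ∑ t, f i t = 1) :
    ∑ b : ∀ i, Fin (κ i), ∏ i, f i (b i) = 1 := by
  classical
  rw [← Fintype.piFinset_univ, ← Finset.prod_univ_sum]
  simp [hf1]

lemma wsum_const (f : ∀ i, Fin (κ i) → ℝ) (hf1 : ∀ i, ∑ t, f i t = 1) (c : ℝ) :
    WSum κ f (fun _ => c) = c := by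
  unfold WSum
  rw [← Finset.sum_mul, sum_pmf_pi f hf1, one_mul]

lemma wsum_nonneg (f : ∀ i, Fin (κ i) → ℝ) (hf : ∀ i t, 0 ≤ f i t)
    {φ : (∀ i, Fin (κ i)) → ℝ} (hφ : ∀ b, 0 ≤ φ b) : 0 ≤ WSum κ f φ :=
  Finset.sum_nonneg fun b _ => mul_nonneg (Finset.prod_nonneg fun i _ => hf i _) (hφ b)

lemma wsum_mul (f : ∀ i, Fin (κ i) → ℝ) (c : ℝ) (φ : (∀ i, Fin (κ i)) → ℝ) :
    WSum κ f (fun b => c * φ b) = c * WSum κ f φ := by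
  unfold WSum
  rw [Finset.mul_sum]
  exact Finset.sum_congr rfl fun b _ => by ring

lemma wsum_sub (f : ∀ i, Fin (κ i) → ℝ) (φ ψ : (∀ i, Fin (κ i)) → ℝ) :
    WSum κ f (fun b => φ b - ψ b) = WSum κ f φ - WSum κ f ψ := by
  unfold WSum
  rw [← Finset.sum_sub_distrib]
  exact Finset.sum_congr rfl fun b _ => by ring

lemma wsum_add (f : ∀ i, Fin (κ i) → ℝ) (φ ψ : (∀ i, Fin (κ i)) → ℝ) :
    WSum κ f (fun b => φ b + ψ b) = WSum κ f φ + WSum κ f ψ := by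
  unfold WSum
  rw [← Finset.sum_add_distrib]
  exact Finset.sum_congr rfl fun b _ => by ring

lemma wsum_sum (f : ∀ i, Fin (κ i) → ℝ) {γ : Type*} (s : Finset γ)
    (φ : γ → (∀ i, Fin (κ i)) → ℝ) :
    WSum κ f (fun b => ∑ x ∈ s, φ x b) = ∑ x ∈ s, WSum κ f (φ x) := by
  unfold WSum
  simp_rw [Finset.mul_sum]
  rw [Finset.sum_comm]

lemma sum_mul_wsum (f : ∀ i, Fin (κ i) → ℝ) {γ : Type*} (s : Finset γ) (c : γ → ℝ)
    (φ : γ → (∀ i, Fin (κ i)) → ℝ) :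
    ∑ x ∈ s, c x * WSum κ f (φ x) = WSum κ f (fun b => ∑ x ∈ s, c x * φ x b) := by
  rw [wsum_sum]
  exact Finset.sum_congr rfl fun x _ => (wsum_mul f (c x) (φ x)).symm

lemma prod_update (f : ∀ i, Fin (κ i) → ℝ) (b : ∀ i, Fin (κ i)) (i : ι) (t : Fin (κ i)) :
    ∏ k, f k (Function.update b i t k)
      = f i t * ∏ k ∈ Finset.univ.erase i, f k (b k) := by
  rw [← Finset.mul_prod_erase Finset.univ (fun k => f k (Function.update b i t k))
    (Finset.mem_univ i)]
  rw [Function.update_self]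
  congr 1
  refine Finset.prod_congr rfl fun k hk => ?_
  rw [Function.update_of_ne (Finset.mem_erase.mp hk).1]

lemma wsum_tower (f : ∀ i, Fin (κ i) → ℝ) (hf1 : ∀ i, ∑ t, f i t = 1) (i : ι)
    (φ : (∀ k, Fin (κ k)) → ℝ) :
    ∑ t, f i t * WSum κ f (fun b => φ (Function.update b i t)) = WSum κ f φ := by
  classical
  have h1 : ∑ t, f i t * WSum κ f (fun b => φ (Function.update b i t))
      = ∑ p : Fin (κ i) × (∀ k, Fin (κ k)),
          f i p.1 * ((∏ k, f k (p.2 k)) * φ (Function.update p.2 i p.1)) := by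
    rw [Fintype.sum_prod_type]
    simp [WSum, Finset.mul_sum]
  have hinv : Function.Involutive
      (fun p : Fin (κ i) × (∀ k, Fin (κ k)) => (p.2 i, Function.update p.2 i p.1)) := by
    intro p
    simp [Function.update_idem, Function.update_eq_self, Function.update_self]
  have h2 : ∑ p : Fin (κ i) × (∀ k, Fin (κ k)),
        f i p.1 * ((∏ k, f k (p.2 k)) * φ (Function.update p.2 i p.1))
      = ∑ p : Fin (κ i) × (∀ k, Fin (κ k)),
          f i (p.2 i) * ((∏ k, f k (Function.update p.2 i p.1 k)) * φ p.2) := by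
    refine Fintype.sum_bijective _ hinv.bijective _ _ fun p => ?_
    simp [Function.update_idem, Function.update_eq_self, Function.update_self]
  rw [h1, h2, Fintype.sum_prod_type, Finset.sum_comm]
  unfold WSum
  refine Finset.sum_congr rfl fun b _ => ?_
  have h3 : ∀ t : Fin (κ i),
      f i (b i) * ((∏ k, f k (Function.update b i t k)) * φ b)
        = f i t * ((f i (b i) * ∏ k ∈ Finset.univ.erase i, f k (b k)) * φ b) := by
    intro t
    rw [prod_update]
    ring
  rw [Finset.sum_congr rfl fun t _ => h3 t, ← Finset.sum_mul,
    hf1 i, one_mul, ← Finset.mul_prod_erase Finset.univ (fun k => f k (b k))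
      (Finset.mem_univ i)]

lemma wsum_marginal (f : ∀ i, Fin (κ i) → ℝ) (hf1 : ∀ i, ∑ t, f i t = 1) (i : ι)
    (φ : Fin (κ i) → ℝ) :
    WSum κ f (fun b => φ (b i)) = ∑ t, f i t * φ t := by
  rw [← wsum_tower f hf1 i (fun b => φ (b i))]
  refine Finset.sum_congr rfl fun t _ => ?_
  congr 1
  have : (fun b : ∀ k, Fin (κ k) => φ (Function.update b i t i)) = fun _ => φ t := by
    funext b; rw [Function.update_self]
  rw [this, wsum_const f hf1]


end WSumLemmas
section ExLemmas
variable {n m : ℕ} {K : Fin n → ℕ} {K' : Fin m → ℕ}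
  (f : ∀ i, Fin (K i) → ℝ) (g : ∀ j, Fin (K' j) → ℝ)

lemma ex_eq (h : ProfileB K → ProfileS K' → ℝ) :
    Ex f g h = WSum K f (fun b => WSum K' g (fun s => h b s)) := by
  unfold Ex WSum
  refine Finset.sum_congr rfl fun b _ => ?_
  rw [Finset.mul_sum]
  exact Finset.sum_congr rfl fun s _ => by ring

lemma ex_congr {h1 h2 : ProfileB K → ProfileS K' → ℝ} (h : ∀ b s, h1 b s = h2 b s) :
    Ex f g h1 = Ex f g h2 := by
  unfold Ex
  exact Finset.sum_congr rfl fun b _ => Finset.sum_congr rfl fun s _ => by rw [h]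

lemma ex_nonneg (hf : ∀ i t, 0 ≤ f i t) (hg : ∀ j t, 0 ≤ g j t)
    {h : ProfileB K → ProfileS K' → ℝ} (hh : ∀ b s, 0 ≤ h b s) : 0 ≤ Ex f g h :=
  Finset.sum_nonneg fun b _ => Finset.sum_nonneg fun s _ =>
    mul_nonneg (mul_nonneg (Finset.prod_nonneg fun i _ => hf i _)
      (Finset.prod_nonneg fun j _ => hg j _)) (hh b s)

lemma ex_sub (h1 h2 : ProfileB K → ProfileS K' → ℝ) :
    Ex f g (fun b s => h1 b s - h2 b s) = Ex f g h1 - Ex f g h2 := by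
  unfold Ex
  rw [← Finset.sum_sub_distrib]
  refine Finset.sum_congr rfl fun b _ => ?_
  rw [← Finset.sum_sub_distrib]
  exact Finset.sum_congr rfl fun s _ => by ring

lemma ex_add (h1 h2 : ProfileB K → ProfileS K' → ℝ) :
    Ex f g (fun b s => h1 b s + h2 b s) = Ex f g h1 + Ex f g h2 := by
  unfold Ex
  rw [← Finset.sum_add_distrib]
  refine Finset.sum_congr rfl fun b _ => ?_
  rw [← Finset.sum_add_distrib]
  exact Finset.sum_congr rfl fun s _ => by ring

lemma ex_mul (c : ℝ) (h : ProfileB K → ProfileS K' → ℝ) :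
    Ex f g (fun b s => c * h b s) = c * Ex f g h := by
  unfold Ex
  rw [Finset.mul_sum]
  refine Finset.sum_congr rfl fun b _ => ?_
  rw [Finset.mul_sum]
  exact Finset.sum_congr rfl fun s _ => by ring

lemma ex_sum {γ : Type*} (s : Finset γ) (h : γ → ProfileB K → ProfileS K' → ℝ) :
    Ex f g (fun b s' => ∑ x ∈ s, h x b s') = ∑ x ∈ s, Ex f g (h x) := by
  simp_rw [ex_eq]
  rw [← wsum_sum]
  refine wsum_congr _ fun b => ?_
  rw [← wsum_sum]

lemma ex_const (hf1 : ∀ i, ∑ t, f i t = 1) (hg1 : ∀ j, ∑ t, g j t = 1) (c : ℝ) :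
    Ex f g (fun _ _ => c) = c := by
  rw [ex_eq]
  rw [wsum_congr f fun b => wsum_const g hg1 c]
  exact wsum_const f hf1 c

lemma ex_towerB (hf1 : ∀ i, ∑ t, f i t = 1) (i : Fin n)
    (u : ProfileB K → ProfileS K' → ℝ) :
    ∑ t, f i t * Ex f g (fun b s => u (Function.update b i t) s) = Ex f g u := by
  simp_rw [ex_eq]
  exact wsum_tower f hf1 i (fun b => WSum K' g (fun s => u b s))

lemma ex_towerS (hg1 : ∀ j, ∑ t, g j t = 1) (j : Fin m)
    (u : ProfileB K → ProfileS K' → ℝ) :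
    ∑ t, g j t * Ex f g (fun b s => u b (Function.update s j t)) = Ex f g u := by
  simp_rw [ex_eq]
  rw [sum_mul_wsum]
  exact wsum_congr f fun b => wsum_tower g hg1 j (fun s => u b s)

lemma ex_margB (hf1 : ∀ i, ∑ t, f i t = 1) (hg1 : ∀ j, ∑ t, g j t = 1)
    (i : Fin n) (φ : Fin (K i) → ℝ) :
    Ex f g (fun b _ => φ (b i)) = ∑ t, f i t * φ t := by
  rw [ex_eq, wsum_congr f fun b => wsum_const g hg1 (φ (b i))]
  exact wsum_marginal f hf1 i φ

lemma ex_margS (hf1 : ∀ i, ∑ t, f i t = 1) (hg1 : ∀ j, ∑ t, g j t = 1)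
    (j : Fin m) (ψ : Fin (K' j) → ℝ) :
    Ex f g (fun _ s => ψ (s j)) = ∑ t, g j t * ψ t := by
  rw [ex_eq, wsum_congr f fun b => wsum_marginal g hg1 j ψ]
  exact wsum_const f hf1 _

lemma ex_zero (hf : ∀ i t, 0 < f i t) (hg : ∀ j t, 0 < g j t)
    {h : ProfileB K → ProfileS K' → ℝ} (hh : ∀ b s, 0 ≤ h b s)
    (hEx : Ex f g h = 0) : ∀ b s, h b s = 0 := by
  unfold Ex at hEx
  intro b s
  have hw : ∀ (b : ProfileB K) (s : ProfileS K'),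
      0 < (∏ i, f i (b i)) * ∏ j, g j (s j) :=
    fun b s => mul_pos (Finset.prod_pos fun i _ => hf i _) (Finset.prod_pos fun j _ => hg j _)
  have h1 := (Finset.sum_eq_zero_iff_of_nonneg (fun b _ => Finset.sum_nonneg fun s _ =>
    mul_nonneg (hw b s).le (hh b s))).mp hEx b (Finset.mem_univ b)
  have h2 := (Finset.sum_eq_zero_iff_of_nonneg (fun s _ =>
    mul_nonneg (hw b s).le (hh b s))).mp h1 s (Finset.mem_univ s)
  have := (hw b s).ne'
  exact by
    rcases mul_eq_zero.mp h2 with h | h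
    · exact absurd h this
    · exact h

end ExLemmas

/-- any IR, BIC, ex-ante WBB double-auction mechanism with nonnegative
payments can be turned, keeping the same allocation rule, into an IR, BIC and strongly
budget balanced mechanism with nonnegative payments. -/
theorem stmt_13
    (n m : ℕ) (hn : 0 < n) (hm : 0 < m)
    (K : Fin n → ℕ) (hK : ∀ i, 0 < K i)
    (K' : Fin m → ℕ) (hK' : ∀ j, 0 < K' j)
    (vB : ∀ i, Fin (K i) → ℝ) (hvB : ∀ i, StrictMono (vB i))
    (vS : ∀ j, Fin (K' j) → ℝ) (hvS : ∀ j, StrictMono (vS j))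
    (f : ∀ i, Fin (K i) → ℝ) (hf : ∀ i t, 0 < f i t) (hf1 : ∀ i, ∑ t, f i t = 1)
    (g : ∀ j, Fin (K' j) → ℝ) (hg : ∀ j t, 0 < g j t) (hg1 : ∀ j, ∑ t, g j t = 1)
    (xB : Fin n → ProfileB K → ProfileS K' → ℝ)
    (xS : Fin m → ProfileB K → ProfileS K' → ℝ)
    (pB : Fin n → ProfileB K → ProfileS K' → ℝ)
    (pS : Fin m → ProfileB K → ProfileS K' → ℝ)
    (hxB01 : ∀ i b s, xB i b s ∈ Set.Icc (0 : ℝ) 1)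
    (hxS01 : ∀ j b s, xS j b s ∈ Set.Icc (0 : ℝ) 1)
    (hpBnn : ∀ i b s, 0 ≤ pB i b s)
    (hpSnn : ∀ j b s, 0 ≤ pS j b s)
    (hBICb : ∀ (i : Fin n) (t t' : Fin (K i)),
      utilB vB f g xB pB i t t' ≤ utilB vB f g xB pB i t t)
    (hBICs : ∀ (j : Fin m) (t t' : Fin (K' j)),
      utilS vS f g xS pS j t t' ≤ utilS vS f g xS pS j t t)
    (hIRb : ∀ (i : Fin n) (t : Fin (K i)), 0 ≤ utilB vB f g xB pB i t t)
    (hIRs : ∀ (j : Fin m) (t : Fin (K' j)), 0 ≤ utilS vS f g xS pS j t t)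
    (hWBB : 0 ≤ Ex f g (fun b s => (∑ i, pB i b s) - ∑ j, pS j b s)) :
    ∃ (pB' : Fin n → ProfileB K → ProfileS K' → ℝ)
      (pS' : Fin m → ProfileB K → ProfileS K' → ℝ),
      (∀ i b s, 0 ≤ pB' i b s) ∧
      (∀ j b s, 0 ≤ pS' j b s) ∧
      -- IR
      (∀ (i : Fin n) (t : Fin (K i)), 0 ≤ utilB vB f g xB pB' i t t) ∧
      (∀ (j : Fin m) (t : Fin (K' j)), 0 ≤ utilS vS f g xS pS' j t t) ∧
      -- BIC
      (∀ (i : Fin n) (t t' : Fin (K i)),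
        utilB vB f g xB pB' i t t' ≤ utilB vB f g xB pB' i t t) ∧
      (∀ (j : Fin m) (t t' : Fin (K' j)),
        utilS vS f g xS pS' j t t' ≤ utilS vS f g xS pS' j t t) ∧
      -- SBB at every type profile
      (∀ b s, ∑ i, pB' i b s = ∑ j, pS' j b s) := by
  classical
  set T := Ex f g (fun b s => ∑ i, pB i b s) with hTdef
  have hTnn : 0 ≤ T := ex_nonneg f g (fun i t => (hf i t).le) (fun j t => (hg j t).le)
    (fun b s => Finset.sum_nonneg fun i _ => hpBnn i b s)
  by_cases hT : T = 0
  · -- degenerate case: all payments are identically zero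
    have hB0 : ∀ b s, ∑ i, pB i b s = 0 :=
      ex_zero f g hf hg (fun b s => Finset.sum_nonneg fun i _ => hpBnn i b s) (hTdef ▸ hT)
    have hEs : Ex f g (fun b s => ∑ j, pS j b s) = 0 := by
      have h1 := ex_sub f g (fun b s => ∑ i, pB i b s) (fun b s => ∑ j, pS j b s)
      have h2 : 0 ≤ Ex f g (fun b s => ∑ j, pS j b s) :=
        ex_nonneg f g (fun i t => (hf i t).le) (fun j t => (hg j t).le)
          (fun b s => Finset.sum_nonneg fun j _ => hpSnn j b s)
      rw [h1, ← hTdef, hT] at hWBB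
      linarith
    have hS0 : ∀ b s, ∑ j, pS j b s = 0 :=
      ex_zero f g hf hg (fun b s => Finset.sum_nonneg fun j _ => hpSnn j b s) hEs
    exact ⟨pB, pS, hpBnn, hpSnn, hIRb, hIRs, hBICb, hBICs,
      fun b s => by rw [hB0, hS0]⟩
  · -- main case
    have hTpos : 0 < T := lt_of_le_of_ne hTnn (Ne.symm hT)
    obtain ⟨P, hP⟩ : ∃ P : ∀ i, Fin (K i) → ℝ, ∀ i (t : Fin (K i)),
        P i t = Ex f g (fun b s => pB i (Function.update b i t) s) := ⟨_, fun _ _ => rfl⟩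
    obtain ⟨Q, hQ⟩ : ∃ Q : ∀ j, Fin (K' j) → ℝ, ∀ j (t : Fin (K' j)),
        Q j t = Ex f g (fun b s => pS j b (Function.update s j t)) := ⟨_, fun _ _ => rfl⟩
    have hPnn : ∀ i t, 0 ≤ P i t := fun i t => by
      rw [hP]
      exact ex_nonneg f g (fun i t => (hf i t).le) (fun j t => (hg j t).le)
        (fun b s => hpBnn i _ s)
    have hQnn : ∀ j t, 0 ≤ Q j t := fun j t => by
      rw [hQ]
      exact ex_nonneg f g (fun i t => (hf i t).le) (fun j t => (hg j t).le)
        (fun b s => hpSnn j b _)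
    set Δ := Ex f g (fun b s => (∑ i, pB i b s) - ∑ j, pS j b s) with hΔdef
    have hΔeq : Δ = T - Ex f g (fun b s => ∑ j, pS j b s) := by
      rw [hΔdef, ex_sub, hTdef]
    obtain ⟨δ, hδnn, hδsum⟩ : ∃ δ : Fin m → ℝ, (∀ j, 0 ≤ δ j) ∧ ∑ j, δ j = Δ := by
      refine ⟨fun j => if j = ⟨0, hm⟩ then Δ else 0, fun j => ?_, ?_⟩
      · dsimp only
        split
        · exact hWBB
        · exact le_refl 0
      · simp
    -- total expected seller-side weight equals T
    have hW : Ex f g (fun b s => ∑ j, (Q j (s j) + δ j)) = T := by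
      have e1 : Ex f g (fun b s => ∑ j, (Q j (s j) + δ j))
          = Ex f g (fun b s => (∑ j, Q j (s j)) + Δ) :=
        ex_congr f g fun b s => by rw [Finset.sum_add_distrib, hδsum]
      have e2 : ∀ j, Ex f g (fun (b : ProfileB K) s => Q j (s j))
          = Ex f g (fun b s => pS j b s) := by
        intro j
        rw [ex_margS f g hf1 hg1 j (Q j)]
        simp_rw [hQ]
        exact ex_towerS f g hg1 j (fun b s => pS j b s)
      rw [e1, ex_add, ex_const f g hf1 hg1, ex_sum,
        Finset.sum_congr rfl fun j _ => e2 j, ← ex_sum, hΔeq]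
      ring
    -- total expected buyer-side weight equals T
    have hA : Ex f g (fun b s => ∑ i, P i (b i)) = T := by
      have e2 : ∀ i, Ex f g (fun (b : ProfileB K) (s : ProfileS K') => P i (b i))
          = Ex f g (fun b s => pB i b s) := by
        intro i
        rw [ex_margB f g hf1 hg1 i (P i)]
        simp_rw [hP]
        exact ex_towerB f g hf1 i (fun b s => pB i b s)
      rw [ex_sum, Finset.sum_congr rfl fun i _ => e2 i, ← ex_sum, hTdef]
    -- utility decompositions
    have util_eqB : ∀ (p : Fin n → ProfileB K → ProfileS K' → ℝ) i (t t' : Fin (K i)),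
        utilB vB f g xB p i t t'
          = Ex f g (fun b s => vB i t * xB i (Function.update b i t') s)
            - Ex f g (fun b s => p i (Function.update b i t') s) := by
      intro p i t t'
      exact ex_sub f g _ _
    have util_eqS : ∀ (p : Fin m → ProfileB K → ProfileS K' → ℝ) j (t t' : Fin (K' j)),
        utilS vS f g xS p j t t'
          = Ex f g (fun b s => p j b (Function.update s j t'))
            - Ex f g (fun b s => vS j t * xS j b (Function.update s j t')) := by
      intro p j t t'
      exact ex_sub f g _ _
    -- interim payments of the new mechanism
    have keyB : ∀ i (t' : Fin (K i)),
        Ex f g (fun b s => P i (Function.update b i t' i) * ((∑ j, (Q j (s j) + δ j)) / T))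
          = P i t' := by
      intro i t'
      have e1 : Ex f g (fun b s =>
            P i (Function.update b i t' i) * ((∑ j, (Q j (s j) + δ j)) / T))
          = Ex f g (fun b s => (P i t' / T) * ∑ j, (Q j (s j) + δ j)) :=
        ex_congr f g fun b s => by rw [Function.update_self]; ring
      rw [e1, ex_mul, hW, div_mul_cancel₀ _ hT]
    have keyS : ∀ j (t' : Fin (K' j)),
        Ex f g (fun b s => (Q j (Function.update s j t' j) + δ j) * ((∑ i, P i (b i)) / T))
          = Q j t' + δ j := by
      intro j t'
      have e1 : Ex f g (fun b s =>
            (Q j (Function.update s j t' j) + δ j) * ((∑ i, P i (b i)) / T))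
          = Ex f g (fun b s => ((Q j t' + δ j) / T) * ∑ i, P i (b i)) :=
        ex_congr f g fun b s => by rw [Function.update_self]; ring
      rw [e1, ex_mul, hA, div_mul_cancel₀ _ hT]
    -- utilities of the new mechanism
    have hUB : ∀ i (t t' : Fin (K i)),
        utilB vB f g xB
          (fun i b s => P i (b i) * ((∑ j, (Q j (s j) + δ j)) / T)) i t t'
          = utilB vB f g xB pB i t t' := by
      intro i t t'
      rw [util_eqB, util_eqB]
      congr 1
      exact (keyB i t').trans (hP i t')
    have hUS : ∀ j (t t' : Fin (K' j)),
        utilS vS f g xS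
          (fun j b s => (Q j (s j) + δ j) * ((∑ i, P i (b i)) / T)) j t t'
          = utilS vS f g xS pS j t t' + δ j := by
      intro j t t'
      rw [util_eqS, util_eqS, ← hQ j t']
      have e : Ex f g (fun b s =>
            (fun j b s => (Q j (s j) + δ j) * ((∑ i, P i (b i)) / T)) j b
              (Function.update s j t'))
          = Q j t' + δ j := keyS j t'
      rw [e]
      ring
    refine ⟨fun i b s => P i (b i) * ((∑ j, (Q j (s j) + δ j)) / T),
      fun j b s => (Q j (s j) + δ j) * ((∑ i, P i (b i)) / T),
      ?_, ?_, ?_, ?_, ?_, ?_, ?_⟩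
    · intro i b s
      exact mul_nonneg (hPnn i _) (div_nonneg
        (Finset.sum_nonneg fun j _ => add_nonneg (hQnn j _) (hδnn j)) hTnn)
    · intro j b s
      exact mul_nonneg (add_nonneg (hQnn j _) (hδnn j))
        (div_nonneg (Finset.sum_nonneg fun i _ => hPnn i _) hTnn)
    · intro i t
      rw [hUB]
      exact hIRb i t
    · intro j t
      rw [hUS]
      have := hIRs j t
      have := hδnn j
      linarith
    · intro i t t'
      rw [hUB, hUB]
      exact hBICb i t t'
    · intro j t t'
      rw [hUS, hUS]
      have := hBICs j t t'
      linarith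
    · intro b s
      rw [← Finset.sum_mul, ← Finset.sum_mul]
      ring


end Stmt13
end

section
/- Let a < c be reals and let x : [a,c] → [0,1] and p : [a,c] → ℝ satisfy: (BIC) for all b, b' ∈ [a,c], b·x(b) − p(b) ≥ b·x(b') − p(b'), and (IR) for all b ∈ [a,c], b·x(b) − p(b) ≥ 0. Then x is nondecreasing on [a,c], and there exists a constant θ ≥ 0 (namely θ = a·x(a) − p(a)) such that for every b ∈ [a,c], p(b) = b·x(b) − ∫_a^b x(t) dt − θ. -/
open Set intervalIntegral

/-! BIC says that the truthful utility `u b = b * x b - p b` satisfies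
`u t ≥ u s + (t - s) * x s`: `u` is convex with subgradient `x`. Adding this inequality to the
one with `s` and `t` swapped gives monotonicity of `x`. Hence `x` is bounded, so `u` is Lipschitz,
and `u` is differentiable with derivative `x` wherever `x` is continuous, that is, off a countable
set; the fundamental theorem of calculus then gives `u b - u a = ∫_a^b x`. -/

section Subgradient

open Asymptotics Filter Topology

variable {u x : ℝ → ℝ} {S : Set ℝ}

theorem monotoneOn_of_subgradient (hsub : ∀ s ∈ S, ∀ t ∈ S, u s + (t - s) * x s ≤ u t) :
    MonotoneOn x S := by
  intro s hs t ht hst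
  rcases hst.eq_or_lt with rfl | hlt
  · exact le_rfl
  nlinarith [hsub s hs t ht, hsub t ht s hs]

theorem abs_sub_sub_mul_le_of_subgradient (hsub : ∀ s ∈ S, ∀ t ∈ S, u s + (t - s) * x s ≤ u t)
    {s t : ℝ} (hs : s ∈ S) (ht : t ∈ S) :
    |u s - u t - (s - t) * x t| ≤ |s - t| * |x s - x t| := by
  have h₁ := hsub s hs t ht
  have h₂ := hsub t ht s hs
  rw [← abs_mul, abs_of_nonneg (by linarith)]
  exact le_trans (by linarith) (le_abs_self _)

theorem lipschitzOnWith_of_subgradient (hsub : ∀ s ∈ S, ∀ t ∈ S, u s + (t - s) * x s ≤ u t)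
    {M : ℝ} (hM : ∀ s ∈ S, |x s| ≤ M) : LipschitzOnWith (Real.toNNReal M) u S := by
  have hle : ∀ s ∈ S, ∀ t ∈ S, u s - u t ≤ M * |s - t| := fun s hs t ht =>
    calc u s - u t ≤ (s - t) * x s := by linarith [hsub s hs t ht]
      _ ≤ |s - t| * |x s| := (le_abs_self _).trans (abs_mul _ _).le
      _ ≤ M * |s - t| := by rw [mul_comm]; exact mul_le_mul_of_nonneg_right (hM s hs) (abs_nonneg _)
  refine LipschitzOnWith.of_dist_le' fun s hs t ht => ?_
  rw [Real.dist_eq, Real.dist_eq, abs_le]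
  constructor
  · linarith [abs_sub_comm t s ▸ hle t ht s hs]
  · exact hle s hs t ht

theorem hasDerivAt_of_subgradient (hsub : ∀ s ∈ S, ∀ t ∈ S, u s + (t - s) * x s ≤ u t)
    {t : ℝ} (hS : S ∈ 𝓝 t) (hx : ContinuousAt x t) : HasDerivAt u (x t) t := by
  rw [hasDerivAt_iff_isLittleO]
  have hbound : (fun s => u s - u t - (s - t) • x t) =O[𝓝 t] fun s => (s - t) * (x s - x t) :=
    IsBigO.of_bound' <| eventually_of_mem hS fun s hs => by
      simpa [abs_mul] using abs_sub_sub_mul_le_of_subgradient hsub hs (mem_of_mem_nhds hS)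
  refine hbound.trans_isLittleO ?_
  simpa using (isBigO_refl (fun s => s - t) _).mul_isLittleO
    ((isLittleO_one_iff ℝ).2 (tendsto_sub_nhds_zero_iff.2 hx))

theorem integral_eq_sub_of_subgradient {a b : ℝ} (hab : a ≤ b)
    (hsub : ∀ s ∈ Icc a b, ∀ t ∈ Icc a b, u s + (t - s) * x s ≤ u t) :
    ∫ t in a..b, x t = u b - u a := by
  have hmono := monotoneOn_of_subgradient hsub
  have hM : ∀ s ∈ Icc a b, |x s| ≤ max |x a| |x b| := fun s hs =>
    abs_le_max_abs_abs (hmono (left_mem_Icc.2 hab) hs hs.1) (hmono hs (right_mem_Icc.2 hab) hs.2)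
  refine MeasureTheory.integral_eq_of_hasDerivAt_off_countable_of_le u x hab
    hmono.countable_not_continuousWithinAt (lipschitzOnWith_of_subgradient hsub hM).continuousOn
    ?_ (MonotoneOn.intervalIntegrable (by rwa [uIcc_of_le hab]))
  rintro t ⟨ht, hcont⟩
  have hS : Icc a b ∈ 𝓝 t := Icc_mem_nhds ht.1 ht.2
  exact hasDerivAt_of_subgradient hsub hS
    ((not_not.1 fun h => hcont ⟨Ioo_subset_Icc_self ht, h⟩).continuousAt hS)

end Subgradient

theorem stmt_14_general (a c : ℝ) (hac : a < c) (x p : ℝ → ℝ)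
    (hBIC : ∀ b ∈ Set.Icc a c, ∀ b' ∈ Set.Icc a c, b * x b' - p b' ≤ b * x b - p b)
    (hIR : ∀ b ∈ Set.Icc a c, 0 ≤ b * x b - p b) :
    MonotoneOn x (Set.Icc a c) ∧
    0 ≤ a * x a - p a ∧
    ∀ b ∈ Set.Icc a c, p b = b * x b - (∫ t in a..b, x t) - (a * x a - p a) := by
  have hsub : ∀ s ∈ Icc a c, ∀ t ∈ Icc a c, (s * x s - p s) + (t - s) * x s ≤ t * x t - p t :=
    fun s hs t ht => by linarith [hBIC t ht s hs]
  refine ⟨monotoneOn_of_subgradient hsub, hIR a (left_mem_Icc.2 hac.le), fun b hb => ?_⟩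
  have hab : Icc a b ⊆ Icc a c := Icc_subset_Icc_right hb.2
  linarith [integral_eq_sub_of_subgradient hb.1 fun s hs t ht => hsub s (hab hs) t (hab ht)]

/-- buyer-side payment identity: if the interim allocation `x` (taking
values in `[0,1]`) and interim payment `p` of a single-dimensional buyer with value space
`[a,c]` satisfy BIC and IR, then `x` is nondecreasing on `[a,c]` and, with
`θ = a·x(a) − p(a) ≥ 0`, for every `b ∈ [a,c]` we have
`p(b) = b·x(b) − ∫_a^b x(t) dt − θ`. -/
theorem stmt_14 (a c : ℝ) (hac : a < c) (x p : ℝ → ℝ)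
    (hx01 : ∀ b ∈ Set.Icc a c, x b ∈ Set.Icc (0 : ℝ) 1)
    (hBIC : ∀ b ∈ Set.Icc a c, ∀ b' ∈ Set.Icc a c, b * x b' - p b' ≤ b * x b - p b)
    (hIR : ∀ b ∈ Set.Icc a c, 0 ≤ b * x b - p b) :
    MonotoneOn x (Set.Icc a c) ∧
    0 ≤ a * x a - p a ∧
    ∀ b ∈ Set.Icc a c, p b = b * x b - (∫ t in a..b, x t) - (a * x a - p a) :=
  stmt_14_general a c hac x p hBIC hIR
end

section
/- Let a < c be reals and let x : [a,c] → [0,1] and p : [a,c] → ℝ satisfy: (BIC) for all s, s' ∈ [a,c], p(s) − s·x(s) ≥ p(s') − s·x(s'), and (IR) for all s ∈ [a,c], p(s) − s·x(s) ≥ 0. Then x is nonincreasing on [a,c], and there exists a constant η ≥ 0 (namely η = p(c) − c·x(c)) such that for every s ∈ [a,c], p(s) = s·x(s) + ∫_s^c x(t) dt + η. -/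
/-!
By BIC, the truthful utility `u s = p s - s * x s` is the upper envelope of the affine functions
`s ↦ p s' - s * x s'`, so each difference quotient of `u` between `s` and `s'` lies between
`-x s` and `-x s'`. This forces `x` to be nonincreasing, hence bounded on `[a, c]`, makes `u`
Lipschitz there, and gives `u' = -x` at every continuity point of `x`, hence off a countable set.
The fundamental theorem of calculus for such functions then yields `u s - u c = ∫ t in s..c, x t`.
-/

open Set intervalIntegral Filter Topology MeasureTheory

def truthfulUtility (x p : ℝ → ℝ) (s : ℝ) : ℝ := p s - s * x s

def IsIncentiveCompatibleOn (I : Set ℝ) (x p : ℝ → ℝ) : Prop :=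
  ∀ s ∈ I, ∀ s' ∈ I, p s' - s * x s' ≤ p s - s * x s

namespace IsIncentiveCompatibleOn

variable {I J : Set ℝ} {x p : ℝ → ℝ} {s s' : ℝ}

theorem mono (h : IsIncentiveCompatibleOn I x p) (hJI : J ⊆ I) : IsIncentiveCompatibleOn J x p :=
  fun s hs s' hs' => h s (hJI hs) s' (hJI hs')

theorem truthfulUtility_sub_le (h : IsIncentiveCompatibleOn I x p) (hs : s ∈ I) (hs' : s' ∈ I) :
    truthfulUtility x p s' - truthfulUtility x p s ≤ (s - s') * x s' := by
  have := h s hs s' hs'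
  unfold truthfulUtility
  linarith

theorem antitoneOn (h : IsIncentiveCompatibleOn I x p) : AntitoneOn x I := by
  intro s hs s' hs' hss'
  rcases hss'.eq_or_lt with rfl | hlt
  · rfl
  have h₁ := h.truthfulUtility_sub_le hs hs'
  have h₂ := h.truthfulUtility_sub_le hs' hs
  nlinarith

theorem abs_truthfulUtility_sub_add_le (h : IsIncentiveCompatibleOn I x p) (hs : s ∈ I)
    (hs' : s' ∈ I) :
    |truthfulUtility x p s' - truthfulUtility x p s + x s * (s' - s)| ≤
      |x s' - x s| * |s' - s| := by
  have h₁ := h.truthfulUtility_sub_le hs hs'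
  have h₂ := h.truthfulUtility_sub_le hs' hs
  rw [abs_of_nonneg (by linarith), ← abs_mul]
  exact le_trans (by linarith) (neg_le_abs _)

theorem lipschitzOnWith_truthfulUtility (h : IsIncentiveCompatibleOn I x p) {K : ℝ}
    (hK : ∀ s ∈ I, |x s| ≤ K) : LipschitzOnWith K.toNNReal (truthfulUtility x p) I := by
  refine LipschitzOnWith.of_le_add_mul' K fun s' hs' s hs => ?_
  have hle := h.truthfulUtility_sub_le hs hs'
  have hbound : (s - s') * x s' ≤ K * dist s' s := by
    rw [Real.dist_eq, abs_sub_comm]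
    calc (s - s') * x s' ≤ |(s - s') * x s'| := le_abs_self _
      _ = |x s'| * |s - s'| := by rw [abs_mul, mul_comm]
      _ ≤ K * |s - s'| := by gcongr; exact hK s' hs'
  linarith

theorem hasDerivAt_truthfulUtility (h : IsIncentiveCompatibleOn I x p) {t : ℝ} (ht : I ∈ 𝓝 t)
    (hxt : ContinuousAt x t) : HasDerivAt (truthfulUtility x p) (-x t) t := by
  rw [hasDerivAt_iff_tendsto_slope, tendsto_iff_norm_sub_tendsto_zero]
  refine squeeze_zero' (Eventually.of_forall fun _ => norm_nonneg _) ?_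
    (tendsto_iff_norm_sub_tendsto_zero.mp (hxt.tendsto.mono_left nhdsWithin_le_nhds))
  filter_upwards [nhdsWithin_le_nhds ht, self_mem_nhdsWithin] with t' ht' hne
  have hd : t' - t ≠ 0 := sub_ne_zero.mpr hne
  have key := h.abs_truthfulUtility_sub_add_le (mem_of_mem_nhds ht) ht'
  rw [slope_def_field, Real.norm_eq_abs, Real.norm_eq_abs, sub_neg_eq_add,
    div_add' _ _ _ hd, abs_div, div_le_iff₀ (abs_pos.mpr hd)]
  exact key

theorem integral_eq_truthfulUtility_sub {a b : ℝ} (h : IsIncentiveCompatibleOn (Icc a b) x p)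
    (hab : a ≤ b) : ∫ t in a..b, x t = truthfulUtility x p a - truthfulUtility x p b := by
  have hanti := h.antitoneOn
  have hbound : ∀ t ∈ Icc a b, |x t| ≤ max |x b| |x a| := fun t ht =>
    abs_le_max_abs_abs (hanti ht (right_mem_Icc.mpr hab) ht.2)
      (hanti (left_mem_Icc.mpr hab) ht ht.1)
  have hderiv : ∀ t ∈ Ioo a b \ {t ∈ Icc a b | ¬ContinuousWithinAt x (Icc a b) t},
      HasDerivAt (truthfulUtility x p) (-x t) t := by
    rintro t ⟨ht, hcont⟩
    have hnhds : Icc a b ∈ 𝓝 t := Icc_mem_nhds ht.1 ht.2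
    have hxt : ContinuousAt x t := by
      by_contra hx
      exact hcont ⟨Ioo_subset_Icc_self ht, fun hw => hx (hw.continuousAt hnhds)⟩
    exact h.hasDerivAt_truthfulUtility hnhds hxt
  have hFTC := integral_eq_of_hasDerivAt_off_countable_of_le _ _ hab
    hanti.countable_not_continuousWithinAt
    (h.lipschitzOnWith_truthfulUtility hbound).continuousOn hderiv
    (uIcc_of_le hab ▸ hanti).intervalIntegrable.neg
  rw [intervalIntegral.integral_neg] at hFTC
  linarith

end IsIncentiveCompatibleOn

theorem stmt_15_general (a c : ℝ) (hac : a < c) (x p : ℝ → ℝ)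
    (hBIC : ∀ s ∈ Set.Icc a c, ∀ s' ∈ Set.Icc a c, p s' - s * x s' ≤ p s - s * x s)
    (hIR : ∀ s ∈ Set.Icc a c, 0 ≤ p s - s * x s) :
    AntitoneOn x (Set.Icc a c) ∧
    0 ≤ p c - c * x c ∧
    ∀ s ∈ Set.Icc a c, p s = s * x s + (∫ t in s..c, x t) + (p c - c * x c) := by
  have hIC : IsIncentiveCompatibleOn (Icc a c) x p := hBIC
  refine ⟨hIC.antitoneOn, hIR c (right_mem_Icc.mpr hac.le), fun s hs => ?_⟩
  have hpay := (hIC.mono (Icc_subset_Icc_left hs.1)).integral_eq_truthfulUtility_sub hs.2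
  unfold truthfulUtility at hpay
  linarith

/-- seller-side payment identity: if the interim allocation `x` (taking
values in `[0,1]`) and interim gain `p` of a single-dimensional seller with cost space
`[a,c]` satisfy BIC and IR, then `x` is nonincreasing on `[a,c]` and, with
`η = p(c) − c·x(c) ≥ 0`, for every `s ∈ [a,c]` we have
`p(s) = s·x(s) + ∫_s^c x(t) dt + η`. -/
theorem stmt_15 (a c : ℝ) (hac : a < c) (x p : ℝ → ℝ)
    (hx01 : ∀ s ∈ Set.Icc a c, x s ∈ Set.Icc (0 : ℝ) 1)
    (hBIC : ∀ s ∈ Set.Icc a c, ∀ s' ∈ Set.Icc a c, p s' - s * x s' ≤ p s - s * x s)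
    (hIR : ∀ s ∈ Set.Icc a c, 0 ≤ p s - s * x s) :
    AntitoneOn x (Set.Icc a c) ∧
    0 ≤ p c - c * x c ∧
    ∀ s ∈ Set.Icc a c, p s = s * x s + (∫ t in s..c, x t) + (p c - c * x c) :=
  stmt_15_general a c hac x p hBIC hIR
end
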